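/- arXiv:1701.09176 — 5 statements merged into one kernel-verified Lean document; each statement's English description precedes it below -/
import Mathlib

section
/- For every real u with u > 1, lim_{R → ∞} (1/(2π)) ∫_{−R}^{R} u^{1/4 − iη} / (1/4 − iη) dη = 1, and for every real u with 0 < u < 1 the same limit equals 0. Equivalently, the principal-value contour integral (1/(2πi)) ∫_γ u^{−s}/(−s) ds along the vertical line γ = {−1/4 + iη : η ∈ ℝ} equals 1 for u > 1 and 0 for 0 < u < 1 (Perron's formula). -/
/-!
Put `c = a - iη` with `a > 0` (here `a = 1/4`) and `L = log u`. Since `Re c > 0`,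
`e^{cL}/c = ∫_{t ≤ L} e^{ct} dt` is the Fourier transform, at `η`, of `h(t) = 1_{t ≤ L} e^{at}`.
Integrating the kernel `e^{-iηt}` over `η ∈ [-R, R]` (Fubini) turns `∫_{-R}^{R} ĥ` into
`i (ĝ(R) - ĝ(-R))` with `g(t) = h(t)/t`, which tends to `0` by the Riemann–Lebesgue lemma
whenever `g` is integrable. For `L < 0` it is. For `L > 0`, `h(0) = 1` spoils this, so one first
subtracts `e^{-a|t|}`, whose transform `1/(a - iη) + 1/(a + iη)` integrates to
`4 arctan (R/a) → 2π`.
-/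

open MeasureTheory intervalIntegral Set Filter Topology Complex

/-- Fourier transform in angular frequency: Mathlib's `𝓕 f (ξ / (2π))`. -/
noncomputable def angularFourier (f : ℝ → ℂ) (ξ : ℝ) : ℂ :=
  ∫ t : ℝ, cexp (-(I * ξ * t)) * f t

theorem norm_exp_neg_I_mul_mul (ξ t : ℝ) : ‖cexp (-(I * ξ * t))‖ = 1 := by
  rw [show -(I * ξ * t) = ((-(ξ * t) : ℝ) : ℂ) * I by push_cast; ring, norm_exp_ofReal_mul_I]

theorem integrable_exp_neg_I_mul_mul {g : ℝ → ℂ} (hg : Integrable g) (ξ : ℝ) :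
    Integrable fun t : ℝ => cexp (-(I * ξ * t)) * g t :=
  hg.bdd_mul (c := 1) (by fun_prop)
    (Eventually.of_forall fun t => (norm_exp_neg_I_mul_mul ξ t).le)

theorem angularFourier_sub {f g : ℝ → ℂ} (hf : Integrable f) (hg : Integrable g) (η : ℝ) :
    angularFourier (f - g) η = angularFourier f η - angularFourier g η := by
  simp only [angularFourier, Pi.sub_apply, mul_sub]
  exact integral_sub (integrable_exp_neg_I_mul_mul hf η) (integrable_exp_neg_I_mul_mul hg η)

theorem angularFourier_indicator_exp {s : Set ℝ} (hs : MeasurableSet s) (z : ℂ) (η : ℝ) :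
    angularFourier (s.indicator fun t : ℝ => cexp (z * t)) η =
      ∫ t in s, cexp ((z - I * η) * t) := by
  simp_rw [angularFourier, ← indicator_mul_right s (fun t : ℝ => cexp (-(I * η * t))),
    ← Complex.exp_add]
  rw [MeasureTheory.integral_indicator hs]
  congr 1 with t
  ring_nf

theorem tendsto_angularFourier_cocompact (f : ℝ → ℂ) :
    Tendsto (angularFourier f) (cocompact ℝ) (𝓝 0) := by
  have hscale : Tendsto (fun ξ : ℝ => (2 * Real.pi)⁻¹ * ξ) (cocompact ℝ) (cocompact ℝ) :=
    (Homeomorph.mulLeft₀ _ (by simp [Real.pi_ne_zero])).toCocompactMap.cocompact_tendsto'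
  refine ((Real.tendsto_integral_exp_smul_cocompact f).comp hscale).congr fun ξ => ?_
  refine integral_congr_ae (Eventually.of_forall fun t => ?_)
  simp only [Circle.smul_def, Real.fourierChar_apply, smul_eq_mul]
  congr 2
  push_cast
  field_simp

theorem intervalIntegral_exp_neg_I_mul_mul (R : ℝ) {t : ℝ} (ht : t ≠ 0) :
    ∫ η in -R..R, cexp (-(I * η * t)) =
      I * (cexp (-(I * R * t)) - cexp (-(I * (-R : ℝ) * t))) / t := by
  have hc : -(I * t) ≠ 0 := by simp [ht]
  simp_rw [show ∀ η : ℝ, -(I * η * t) = -(I * t) * η by intro η; ring]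
  rw [integral_exp_mul_complex hc]
  field_simp
  push_cast
  ring_nf
  rw [I_sq]
  ring

theorem intervalIntegral_angularFourier {h : ℝ → ℂ} (hh : Integrable h)
    (hdiv : Integrable fun t : ℝ => h t / t) (R : ℝ) :
    ∫ η in -R..R, angularFourier h η =
      I * (angularFourier (fun t => h t / t) R - angularFourier (fun t => h t / t) (-R)) := by
  have : IsFiniteMeasure (volume.restrict (uIoc (-R) R)) :=
    isFiniteMeasure_restrict.2 measure_Ioc_lt_top.ne
  simp only [angularFourier]
  rw [intervalIntegral_integral_swap]
  · rw [← integral_sub (integrable_exp_neg_I_mul_mul hdiv R)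
      (integrable_exp_neg_I_mul_mul hdiv (-R)), ← MeasureTheory.integral_const_mul]
    refine integral_congr_ae ?_
    filter_upwards [Measure.ae_ne volume 0] with t ht
    rw [intervalIntegral.integral_mul_const, intervalIntegral_exp_neg_I_mul_mul R ht]
    ring
  · refine (hh.comp_snd _).norm.mono'
      ((Continuous.aestronglyMeasurable (by fun_prop)).mul hh.aestronglyMeasurable.comp_snd)
      (Eventually.of_forall fun ⟨η, t⟩ => ?_)
    rw [Function.uncurry_apply_pair, norm_mul, norm_exp_neg_I_mul_mul, one_mul]

theorem tendsto_intervalIntegral_angularFourier {h : ℝ → ℂ} (hh : Integrable h)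
    (hdiv : Integrable fun t : ℝ => h t / t) :
    Tendsto (fun R : ℝ => ∫ η in -R..R, angularFourier h η) atTop (𝓝 0) := by
  have hRL := tendsto_angularFourier_cocompact fun t => h t / t
  have hpos := hRL.mono_left atTop_le_cocompact
  have hneg := hRL.comp (tendsto_neg_atTop_atBot.mono_right atBot_le_cocompact)
  simpa [intervalIntegral_angularFourier hh hdiv] using (hpos.sub hneg).const_mul I

theorem MeasureTheory.Integrable.div_ofReal_of_eq_zero_of_abs_lt {h : ℝ → ℂ} (hh : Integrable h)
    {δ : ℝ} (hδ : 0 < δ) (h0 : ∀ t, |t| < δ → h t = 0) : Integrable fun t : ℝ => h t / t := by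
  refine (hh.norm.const_mul δ⁻¹).mono' (hh.aestronglyMeasurable.mul
    (by fun_prop : Measurable fun t : ℝ => (t : ℂ)⁻¹).aestronglyMeasurable)
    (Eventually.of_forall fun t => ?_)
  rcases lt_or_ge |t| δ with ht | ht
  · simp [h0 t ht]
  · calc ‖h t / t‖ = ‖h t‖ / |t| := by rw [norm_div, norm_real, Real.norm_eq_abs]
      _ ≤ ‖h t‖ / δ := by gcongr
      _ = δ⁻¹ * ‖h t‖ := by ring

theorem Real.exp_sub_exp_neg_le {x : ℝ} (hx : 0 ≤ x) :
    Real.exp x - Real.exp (-x) ≤ 2 * x * Real.exp x := by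
  have hprod : Real.exp x * Real.exp (-x) = 1 := by
    rw [← Real.exp_add, add_neg_cancel, Real.exp_zero]
  nlinarith [Real.add_one_le_exp x, Real.add_one_le_exp (-x), Real.exp_pos x]

theorem norm_exp_sub_exp_neg_div_le {a t : ℝ} (ha : 0 ≤ a) (ht : 0 < t) :
    ‖(cexp (a * t) - cexp (-a * t)) / t‖ ≤ 2 * a * Real.exp (a * t) := by
  have hreal : (cexp (a * t) - cexp (-a * t)) / t =
      ((Real.exp (a * t) - Real.exp (-(a * t))) / t : ℝ) := by
    push_cast; ring_nf
  have hnonneg : 0 ≤ Real.exp (a * t) - Real.exp (-(a * t)) :=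
    sub_nonneg.2 (Real.exp_le_exp.2 (by nlinarith))
  rw [hreal, norm_real, Real.norm_eq_abs, abs_div, abs_of_nonneg hnonneg, abs_of_pos ht,
    div_le_iff₀ ht]
  nlinarith [Real.exp_sub_exp_neg_le (mul_nonneg ha ht.le)]

theorem ofReal_sub_I_mul_ne_zero {a : ℝ} (ha : a ≠ 0) (η : ℝ) : (a : ℂ) - I * η ≠ 0 := by
  simp [Complex.ext_iff, ha]

theorem ofReal_add_I_mul_ne_zero {a : ℝ} (ha : a ≠ 0) (η : ℝ) : (a : ℂ) + I * η ≠ 0 := by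
  simp [Complex.ext_iff, ha]

theorem continuous_inv_sub_I_mul_add_inv_add_I_mul {a : ℝ} (ha : a ≠ 0) :
    Continuous fun η : ℝ => 1 / ((a : ℂ) - I * η) + 1 / (a + I * η) :=
  (continuous_const.div (by fun_prop) (ofReal_sub_I_mul_ne_zero ha)).add
    (continuous_const.div (by fun_prop) (ofReal_add_I_mul_ne_zero ha))

theorem intervalIntegral_inv_sub_I_mul_add_inv_add_I_mul {a : ℝ} (ha : 0 < a) (R : ℝ) :
    ∫ η in -R..R, (1 / (a - I * η) + 1 / (a + I * η)) = ((4 * Real.arctan (R / a) : ℝ) : ℂ) := by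
  have hderiv (η : ℝ) : HasDerivAt (fun η : ℝ => ((2 * Real.arctan (η / a) : ℝ) : ℂ))
      (1 / (a - I * η) + 1 / (a + I * η)) η := by
    refine (((Real.hasDerivAt_arctan (η / a)).comp η ((hasDerivAt_id η).div_const a)).const_mul
      2).ofReal_comp.congr_deriv ?_
    rw [div_add_div _ _ (ofReal_sub_I_mul_ne_zero ha.ne' η) (ofReal_add_I_mul_ne_zero ha.ne' η),
      show ((a : ℂ) - I * η) * (a + I * η) = a ^ 2 + η ^ 2 by linear_combination -η ^ 2 * I_sq]
    have hreal : 2 * (1 / (1 + (η / a) ^ 2) * (1 / a)) = 2 * a / (a ^ 2 + η ^ 2) := by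
      field_simp
    rw [hreal]
    push_cast
    ring
  rw [integral_eq_sub_of_hasDerivAt (fun η _ => hderiv η) (Continuous.intervalIntegrable ?_ _ _)]
  · push_cast [neg_div, Real.arctan_neg]
    ring
  · exact continuous_inv_sub_I_mul_add_inv_add_I_mul ha.ne'

theorem tendsto_four_mul_arctan_div {a : ℝ} (ha : 0 < a) :
    Tendsto (fun R : ℝ => ((4 * Real.arctan (R / a) : ℝ) : ℂ)) atTop (𝓝 (2 * Real.pi)) := by
  have h := ((Real.tendsto_arctan_atTop.mono_right nhdsWithin_le_nhds).comp
    (tendsto_id.atTop_div_const ha)).const_mul 4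
  rw [show 4 * (Real.pi / 2) = 2 * Real.pi by ring] at h
  exact_mod_cast (continuous_ofReal.tendsto _).comp h

theorem integrable_indicator_Ioc_exp (z : ℂ) (b c : ℝ) :
    Integrable ((Ioc b c).indicator fun t : ℝ => cexp (z * t)) :=
  (integrable_indicator_iff measurableSet_Ioc).2
    ((by fun_prop : Continuous fun t : ℝ => cexp (z * t)).integrableOn_Ioc)

theorem integrable_indicator_Ioi_exp {z : ℂ} (hz : z.re < 0) (c : ℝ) :
    Integrable ((Ioi c).indicator fun t : ℝ => cexp (z * t)) :=
  (integrable_indicator_iff measurableSet_Ioi).2 (integrableOn_exp_mul_complex_Ioi hz c)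

theorem exp_div_eq_angularFourier_indicator_Iic {a : ℝ} (ha : 0 < a) (L η : ℝ) :
    cexp ((a - I * η) * L) / (a - I * η) =
      angularFourier ((Iic L).indicator fun t : ℝ => cexp (a * t)) η := by
  rw [angularFourier_indicator_exp measurableSet_Iic,
    integral_exp_mul_complex_Iic (by simpa using ha)]

theorem tendsto_intervalIntegral_exp_div_of_neg {a L : ℝ} (ha : 0 < a) (hL : L < 0) :
    Tendsto (fun R : ℝ => ∫ η in -R..R, cexp ((a - I * η) * L) / (a - I * η)) atTop (𝓝 0) := by
  have hh : Integrable ((Iic L).indicator fun t : ℝ => cexp (a * t)) :=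
    (integrable_indicator_iff measurableSet_Iic).2
      (integrableOn_exp_mul_complex_Iic (by simpa using ha) L)
  simp_rw [exp_div_eq_angularFourier_indicator_Iic ha L]
  refine tendsto_intervalIntegral_angularFourier hh
    (hh.div_ofReal_of_eq_zero_of_abs_lt (neg_pos.2 hL) fun t ht => indicator_of_notMem ?_ _)
  simp only [mem_Iic, not_le]
  linarith [neg_abs_le t]

theorem exp_div_sub_eq_angularFourier_indicator {a L : ℝ} (ha : 0 < a) (hL : 0 ≤ L) (η : ℝ) :
    cexp ((a - I * η) * L) / (a - I * η) - (1 / (a - I * η) + 1 / (a + I * η)) =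
      angularFourier ((Ioc 0 L).indicator (fun t : ℝ => cexp (a * t)) -
        (Ioi 0).indicator fun t : ℝ => cexp (-a * t)) η := by
  have hc := ofReal_sub_I_mul_ne_zero ha.ne' η
  have hc' := ofReal_add_I_mul_ne_zero ha.ne' η
  rw [angularFourier_sub (integrable_indicator_Ioc_exp _ 0 L)
      (integrable_indicator_Ioi_exp (by simpa using ha) 0),
    angularFourier_indicator_exp measurableSet_Ioc,
    angularFourier_indicator_exp measurableSet_Ioi, ← intervalIntegral.integral_of_le hL,
    integral_exp_mul_complex hc, integral_exp_mul_complex_Ioi (by simpa using ha),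
    show -(a : ℂ) - I * η = -(a + I * η) by ring]
  simp only [ofReal_zero, mul_zero, Complex.exp_zero]
  field_simp
  ring

theorem integrable_indicator_Ioc_sub_indicator_Ioi_div {a L : ℝ} (ha : 0 < a) (hL : 0 < L) :
    Integrable fun t : ℝ => ((Ioc 0 L).indicator (fun t : ℝ => cexp (a * t)) -
      (Ioi 0).indicator fun t : ℝ => cexp (-a * t)) t / t := by
  have hsplit : (fun t : ℝ => ((Ioc 0 L).indicator (fun t : ℝ => cexp (a * t)) -
      (Ioi 0).indicator fun t : ℝ => cexp (-a * t)) t / t) =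
      (Ioc 0 L).indicator (fun t : ℝ => (cexp (a * t) - cexp (-a * t)) / t) -
        fun t : ℝ => (Ioi L).indicator (fun t : ℝ => cexp (-a * t)) t / t := by
    ext t
    simp only [Pi.sub_apply, indicator_apply, mem_Ioc, mem_Ioi]
    split_ifs <;> first | ring1 | grind
  rw [hsplit]
  refine Integrable.sub ((integrable_indicator_iff measurableSet_Ioc).2 ?_) ?_
  · refine Measure.integrableOn_of_bounded (M := 2 * a * Real.exp (a * L))
      measure_Ioc_lt_top.ne (Measurable.aestronglyMeasurable (by fun_prop))
      ((ae_restrict_iff' measurableSet_Ioc).2 (Eventually.of_forall fun t ht =>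
        (norm_exp_sub_exp_neg_div_le ha.le ht.1).trans ?_))
    gcongr
    exact ht.2
  · refine (integrable_indicator_Ioi_exp (by simpa using ha) L).div_ofReal_of_eq_zero_of_abs_lt
      hL fun t ht => indicator_of_notMem ?_ _
    simp only [mem_Ioi, not_lt]
    linarith [le_abs_self t]

theorem tendsto_intervalIntegral_exp_div_of_pos {a L : ℝ} (ha : 0 < a) (hL : 0 < L) :
    Tendsto (fun R : ℝ => ∫ η in -R..R, cexp ((a - I * η) * L) / (a - I * η)) atTop
      (𝓝 (2 * Real.pi)) := by
  have hF : Continuous fun η : ℝ => cexp ((a - I * η) * L) / (a - I * η) :=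
    (by fun_prop : Continuous _).div (by fun_prop) (ofReal_sub_I_mul_ne_zero ha.ne')
  have hsplit (R : ℝ) : ∫ η in -R..R, cexp ((a - I * η) * L) / (a - I * η) =
      (∫ η in -R..R, angularFourier ((Ioc 0 L).indicator (fun t : ℝ => cexp (a * t)) -
        (Ioi 0).indicator fun t : ℝ => cexp (-a * t)) η) +
      ((4 * Real.arctan (R / a) : ℝ) : ℂ) := by
    simp_rw [← exp_div_sub_eq_angularFourier_indicator ha hL.le]
    rw [intervalIntegral.integral_sub (hF.intervalIntegrable _ _)
      ((continuous_inv_sub_I_mul_add_inv_add_I_mul ha.ne').intervalIntegrable _ _),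
      intervalIntegral_inv_sub_I_mul_add_inv_add_I_mul ha]
    ring
  have hlim := (tendsto_intervalIntegral_angularFourier ((integrable_indicator_Ioc_exp _ 0 L).sub
    (integrable_indicator_Ioi_exp (by simpa using ha) 0))
    (integrable_indicator_Ioc_sub_indicator_Ioi_div ha hL)).add (tendsto_four_mul_arctan_div ha)
  rw [zero_add] at hlim
  exact hlim.congr fun R => (hsplit R).symm

/-- **Perron's formula** along the vertical line `γ = {-1/4 + iη : η ∈ ℝ}`:
the principal-value integral `(1/(2πi)) ∫_γ u^{-s}/(-s) ds
  = lim_{R→∞} (1/(2π)) ∫_{-R}^R u^{1/4-iη}/(1/4-iη) dη`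
equals `1` for `u > 1` and `0` for `0 < u < 1`, where
`u^{1/4-iη} = exp((1/4-iη) log u)`. -/
theorem perron_formula (u : ℝ) (hu : 0 < u) :
    (1 < u → Filter.Tendsto
      (fun R : ℝ => (1 / (2 * (Real.pi : ℂ))) * ∫ η in -R..R,
        Complex.exp (((1 / 4 : ℂ) - Complex.I * (η : ℂ)) * (Real.log u : ℂ)) /
          ((1 / 4 : ℂ) - Complex.I * (η : ℂ)))
      Filter.atTop (nhds 1)) ∧
    (u < 1 → Filter.Tendsto
      (fun R : ℝ => (1 / (2 * (Real.pi : ℂ))) * ∫ η in -R..R,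
        Complex.exp (((1 / 4 : ℂ) - Complex.I * (η : ℂ)) * (Real.log u : ℂ)) /
          ((1 / 4 : ℂ) - Complex.I * (η : ℂ)))
      Filter.atTop (nhds 0)) := by
  have ha : (0 : ℝ) < 1 / 4 := by norm_num
  constructor
  · intro hu1
    have h := (tendsto_intervalIntegral_exp_div_of_pos ha (Real.log_pos hu1)).const_mul
      (1 / (2 * (Real.pi : ℂ)))
    rw [one_div_mul_cancel (by simp [Real.pi_ne_zero])] at h
    push_cast at h
    exact h
  · intro hu1
    have h := (tendsto_intervalIntegral_exp_div_of_neg ha (Real.log_neg hu hu1)).const_mul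
      (1 / (2 * (Real.pi : ℂ)))
    rw [mul_zero] at h
    push_cast at h
    exact h
end

section
/- There is an absolute constant C > 0 such that for every real u > 1 and every R ≥ 1, the integral of u^{−s}/(−s) over the semicircular contour C_R = {−1/4 − i R e^{iφ} : 0 ≤ φ ≤ π} satisfies | ∫_{C_R} u^{−s}/(−s) ds | ≤ C u^{1/4} (1 − u^{−R/2}) / (R log u). Here the contour integral means ∫_0^π [u^{−s(φ)}/(−s(φ))] s′(φ) dφ with s(φ) = −1/4 − i R e^{iφ}. -/
/-!
On the contour `s(φ) = -1/4 - iRe^{iφ}` one has `|u^{-s}| = u^{1/4} e^{-A sin φ}` with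
`A = R log u`, `|s| ≥ R - 1/4 ≥ 3R/4` and `|s'(φ)| = R`, so the integral is at most
`(4/3) u^{1/4} ∫_0^π e^{-A sin φ} dφ`. By the symmetry `φ ↦ π - φ` and Jordan's inequality
`sin φ ≥ 2φ/π` on `[0, π/2]`, the last integral is at most `π (1 - e^{-A}) / A`, and
`1 - e^{-A} ≤ 2 (1 - e^{-A/2})`. This gives the bound with `C = 8π/3`.
-/

open MeasureTheory

section Jordan

open Real

theorem integral_exp_mul {c : ℝ} (hc : c ≠ 0) (a b : ℝ) :
    ∫ x in a..b, exp (c * x) = (exp (c * b) - exp (c * a)) / c := by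
  rw [intervalIntegral.integral_comp_mul_left (fun x => exp x) hc, integral_exp, smul_eq_mul,
    inv_mul_eq_div]

theorem integral_comp_sin_eq_two_mul {f : ℝ → ℝ} (hf : Continuous f) :
    ∫ φ in (0 : ℝ)..π, f (sin φ) = 2 * ∫ φ in (0 : ℝ)..π / 2, f (sin φ) := by
  have hint : ∀ a b : ℝ, IntervalIntegrable (fun φ => f (sin φ)) volume a b :=
    fun a b => (hf.comp continuous_sin).intervalIntegrable a b
  have hsymm : ∫ φ in π / 2..π, f (sin φ) = ∫ φ in (0 : ℝ)..π / 2, f (sin φ) :=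
    calc ∫ φ in π / 2..π, f (sin φ) = ∫ φ in π / 2..π, f (sin (π - φ)) := by
          simp only [sin_pi_sub]
      _ = ∫ φ in (0 : ℝ)..π / 2, f (sin φ) := by
          rw [intervalIntegral.integral_comp_sub_left (fun φ => f (sin φ)), sub_self, sub_half]
  rw [← intervalIntegral.integral_add_adjacent_intervals (hint 0 (π / 2)) (hint (π / 2) π),
    hsymm, two_mul]

theorem integral_exp_neg_mul_sin_le {A : ℝ} (hA : 0 < A) :
    ∫ φ in (0 : ℝ)..π, exp (-(A * sin φ)) ≤ π * (1 - exp (-A)) / A := by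
  have hc : -(2 * A / π) ≠ 0 := neg_ne_zero.mpr (by positivity)
  have jordan : ∫ φ in (0 : ℝ)..π / 2, exp (-(A * sin φ)) ≤
      ∫ φ in (0 : ℝ)..π / 2, exp (-(2 * A / π) * φ) := by
    refine intervalIntegral.integral_mono_on (by positivity)
      ((continuous_exp.comp (by fun_prop)).intervalIntegrable _ _)
      ((continuous_exp.comp (by fun_prop)).intervalIntegrable _ _) fun φ hφ => ?_
    have := mul_le_mul_of_nonneg_left (mul_le_sin hφ.1 hφ.2) hA.le
    gcongr
    calc -(A * sin φ) ≤ -(A * (2 / π * φ)) := by linarith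
      _ = _ := by ring
  rw [integral_comp_sin_eq_two_mul (f := fun x => exp (-(A * x))) (by fun_prop)]
  calc 2 * ∫ φ in (0 : ℝ)..π / 2, exp (-(A * sin φ))
      ≤ 2 * ∫ φ in (0 : ℝ)..π / 2, exp (-(2 * A / π) * φ) := by gcongr
    _ = π * (1 - exp (-A)) / A := by
      have hend : -(2 * A / π) * (π / 2) = -A := by field_simp
      rw [integral_exp_mul hc, hend, mul_zero, exp_zero]
      field_simp
      ring

theorem one_sub_exp_neg_le (x : ℝ) : 1 - exp (-x) ≤ 2 * (1 - exp (-x / 2)) := by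
  have : exp (-x) = exp (-x / 2) ^ 2 := by rw [← exp_nat_mul]; ring_nf
  nlinarith [sq_nonneg (1 - exp (-x / 2))]

end Jordan

section Semicircle

open Complex

noncomputable def semicircle (a : ℂ) (R φ : ℝ) : ℂ := a - I * R * exp (I * φ)

theorem re_semicircle (a : ℂ) (R φ : ℝ) : (semicircle a R φ).re = a.re + R * Real.sin φ := by
  simp [semicircle, mul_comm I (φ : ℂ), exp_mul_I, ← ofReal_cos, ← ofReal_sin]

theorem sub_norm_le_norm_semicircle (a : ℂ) {R : ℝ} (hR : 0 ≤ R) (φ : ℝ) :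
    R - ‖a‖ ≤ ‖semicircle a R φ‖ := by
  have h : ‖I * R * exp (I * φ)‖ = R := by
    simp [norm_exp_I_mul_ofReal, abs_of_nonneg hR]
  have := norm_sub_norm_le (I * R * exp (I * φ)) a
  rwa [h, norm_sub_rev] at this

theorem norm_semicircle_integrand_le {a : ℂ} {R : ℝ} (hR : ‖a‖ < R) (L φ : ℝ) :
    ‖exp (-semicircle a R φ * L) / -semicircle a R φ * (R * exp (I * φ))‖ ≤
      R / (R - ‖a‖) * Real.exp (-a.re * L) * Real.exp (-(R * L * Real.sin φ)) := by
  have hR0 : 0 ≤ R := (norm_nonneg a).trans hR.le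
  have hnum : ‖exp (-semicircle a R φ * L)‖ =
      Real.exp (-a.re * L) * Real.exp (-(R * L * Real.sin φ)) := by
    rw [norm_exp, ← Real.exp_add, neg_mul, neg_re, re_mul_ofReal, re_semicircle]
    ring_nf
  rw [norm_mul, norm_div, norm_neg, hnum, norm_mul, norm_exp_I_mul_ofReal, norm_real,
    Real.norm_of_nonneg hR0, mul_one]
  calc Real.exp (-a.re * L) * Real.exp (-(R * L * Real.sin φ)) / ‖semicircle a R φ‖ * R
      ≤ Real.exp (-a.re * L) * Real.exp (-(R * L * Real.sin φ)) / (R - ‖a‖) * R := by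
        gcongr
        exact sub_norm_le_norm_semicircle a hR0 φ
    _ = _ := by ring

theorem norm_integral_semicircle_le {a : ℂ} {R L : ℝ} (hR : ‖a‖ < R) (hL : 0 < L) :
    ‖∫ φ in (0 : ℝ)..Real.pi,
        exp (-semicircle a R φ * L) / -semicircle a R φ * (R * exp (I * φ))‖ ≤
      R / (R - ‖a‖) * Real.exp (-a.re * L) *
        (Real.pi * (1 - Real.exp (-(R * L))) / (R * L)) := by
  have hRL : 0 < R * L := mul_pos ((norm_nonneg a).trans_lt hR) hL
  calc _ ≤ ∫ φ in (0 : ℝ)..Real.pi,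
        R / (R - ‖a‖) * Real.exp (-a.re * L) * Real.exp (-(R * L * Real.sin φ)) :=
        intervalIntegral.norm_integral_le_of_norm_le Real.pi_pos.le
          (Filter.Eventually.of_forall fun φ _ => norm_semicircle_integrand_le hR L φ)
          (Continuous.intervalIntegrable (by fun_prop) _ _)
    _ ≤ _ := by
      rw [intervalIntegral.integral_const_mul]
      have : 0 ≤ R / (R - ‖a‖) := div_nonneg ((norm_nonneg a).trans hR.le) (by linarith)
      gcongr
      exact integral_exp_neg_mul_sin_le hRL

end Semicircle

/-- Bound on the integral of `u^{-s}/(-s)` over the semicircular contour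
`C_R = {-1/4 - iRe^{iφ} : 0 ≤ φ ≤ π}`: there is an absolute constant `C > 0` such that
for all `u > 1` and `R ≥ 1`,
`|∫_{C_R} u^{-s}/(-s) ds| ≤ C u^{1/4} (1 - u^{-R/2})/(R log u)`.
The contour integral is `∫_0^π [u^{-s(φ)}/(-s(φ))] s'(φ) dφ` with
`s(φ) = -1/4 - iRe^{iφ}` and hence `s'(φ) = Re^{iφ}`. -/
theorem semicircle_contour_bound :
    ∃ C > 0, ∀ u : ℝ, 1 < u → ∀ R : ℝ, 1 ≤ R →
      ‖∫ φ in (0 : ℝ)..Real.pi,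
          Complex.exp (-(-(1 / 4) - Complex.I * (R : ℂ) * Complex.exp (Complex.I * (φ : ℂ))) *
              (Real.log u : ℂ)) /
            (-(-(1 / 4) - Complex.I * (R : ℂ) * Complex.exp (Complex.I * (φ : ℂ)))) *
            ((R : ℂ) * Complex.exp (Complex.I * (φ : ℂ)))‖ ≤
        C * u ^ ((1 : ℝ) / 4) * (1 - u ^ (-R / 2)) / (R * Real.log u) := by
  refine ⟨8 * Real.pi / 3, by positivity, fun u hu R hR => ?_⟩
  have hL := Real.log_pos hu
  have hRL : 0 < R * Real.log u := mul_pos (by linarith) hL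
  have hnorm : ‖(-(1 / 4) : ℂ)‖ = 1 / 4 := by norm_num
  have hre : (-(1 / 4) : ℂ).re = -(1 / 4) := by norm_num
  have hbound := norm_integral_semicircle_le (a := -(1 / 4)) (R := R) (by rw [hnorm]; linarith) hL
  rw [hnorm, hre] at hbound
  refine hbound.trans ?_
  have hfactor : R / (R - 1 / 4) ≤ 4 / 3 := by
    rw [div_le_iff₀ (by linarith)]; linarith
  have hexp_le_one := Real.exp_le_one_iff.mpr (neg_nonpos.mpr hRL.le)
  rw [Real.rpow_def_of_pos (by linarith), Real.rpow_def_of_pos (by linarith)]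
  calc _ ≤ 4 / 3 * Real.exp (-(-(1 / 4)) * Real.log u) *
        (Real.pi * (2 * (1 - Real.exp (-(R * Real.log u) / 2))) / (R * Real.log u)) := by
        gcongr
        exact one_sub_exp_neg_le _
    _ = _ := by ring_nf
end

section
/- Let k be a positive integer and let T_k be the k × k symmetric tridiagonal matrix with every diagonal entry equal to −1, every entry on the first super- and sub-diagonal equal to 1/2, and all other entries 0. Then T_k is invertible and its inverse satisfies (T_k^{−1})_{i,j} = 2 i (j − k − 1)/(k + 1) for all indices 1 ≤ i ≤ j ≤ k (indices starting from 1), and (T_k^{−1})_{i,j} = (T_k^{−1})_{j,i} for all i, j. -/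
/-!
The inverse is the Green's function of the discrete Dirichlet problem on `{0, …, k-1}`:
`G(a, b) = 2 (min a b + 1) (max a b - k) / (k + 1)` is affine in `a` on either side of `b`,
vanishes at the ghost points `a = -1` and `a = k`, and its second difference jumps by `2` at
`a = b`. Hence `T` (one half of the second difference operator with Dirichlet boundary
conditions) maps the columns of `G` to the columns of the identity.
-/

noncomputable def greenFun (k : ℕ) (a b : ℤ) : ℝ :=
  2 * ((min a b : ℤ) + 1) * ((max a b : ℤ) - k) / (k + 1)

namespace greenFun

variable {k : ℕ}

theorem comm (a b : ℤ) : greenFun k a b = greenFun k b a := by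
  rw [greenFun, greenFun, min_comm, max_comm]

theorem of_le {a b : ℤ} (h : a ≤ b) :
    greenFun k a b = 2 * ((a : ℝ) + 1) * ((b : ℝ) - k) / (k + 1) := by
  rw [greenFun, min_eq_left h, max_eq_right h]

theorem neg_one_left {b : ℤ} (hb : -1 ≤ b) : greenFun k (-1) b = 0 := by
  rw [of_le hb]
  push_cast
  ring

theorem natCast_left {b : ℤ} (hb : b ≤ k) : greenFun k k b = 0 := by
  rw [comm, of_le hb]
  push_cast
  ring

theorem half_second_difference (a b : ℤ) :
    -greenFun k a b + (greenFun k (a - 1) b + greenFun k (a + 1) b) / 2 =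
      if a = b then 1 else 0 := by
  have hk : (k : ℝ) + 1 ≠ 0 := by positivity
  rcases lt_trichotomy a b with hab | rfl | hab
  · rw [if_neg hab.ne, of_le hab.le, of_le (by omega), of_le (by omega)]
    push_cast
    ring
  · rw [if_pos rfl, of_le le_rfl, of_le (by omega), comm, of_le (by omega)]
    push_cast
    field_simp
    ring
  · rw [if_neg hab.ne', comm, comm (a - 1), comm (a + 1), of_le hab.le, of_le (by omega),
      of_le (by omega)]
    push_cast
    ring

end greenFun

noncomputable def greenMatrix (k : ℕ) : Matrix (Fin k) (Fin k) ℝ :=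
  Matrix.of fun i j => greenFun k i j

theorem sum_fin_ite_intCast_eq {M : Type*} [AddCommMonoid M] {k : ℕ} (f : ℤ → M)
    (hf₀ : f (-1) = 0) (hfk : f k = 0)
    {m : ℤ} (hm₀ : -1 ≤ m) (hmk : m ≤ k) :
    ∑ l : Fin k, (if (l : ℤ) = m then f l else 0) = f m := by
  by_cases hm : 0 ≤ m ∧ m < k
  · lift m to ℕ using hm.1
    have hmk' : m < k := by exact_mod_cast hm.2
    rw [Finset.sum_eq_single ⟨m, hmk'⟩
      (fun l _ hl => if_neg fun h => hl (Fin.ext (by simp only; omega))) (by simp)]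
    simp
  · have hfm : f m = 0 := by
      rcases (by omega : m = -1 ∨ m = k) with rfl | rfl <;> assumption
    rw [hfm]
    exact Finset.sum_eq_zero fun l _ => if_neg (by omega)

theorem tridiagonal_sum_mul {k : ℕ} {T : Matrix (Fin k) (Fin k) ℝ}
    (hT : ∀ i j : Fin k, T i j =
      if (i : ℕ) = j then -1
      else if (i : ℕ) + 1 = j ∨ (j : ℕ) + 1 = i then 1 / 2 else 0)
    (f : ℤ → ℝ) (hf₀ : f (-1) = 0) (hfk : f k = 0) (i : Fin k) :
    ∑ l : Fin k, T i l * f l = -f i + (f (i - 1) + f (i + 1)) / 2 := by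
  have hrow : ∀ l : Fin k, T i l * f l =
      -(if (l : ℤ) = i then f l else 0) + (if (l : ℤ) = i - 1 then f l else 0) / 2 +
        (if (l : ℤ) = i + 1 then f l else 0) / 2 := by
    intro l
    rw [hT]
    split_ifs <;> first | ring1 | (exfalso; omega)
  have hi := i.isLt
  simp only [hrow, Finset.sum_add_distrib, Finset.sum_neg_distrib, ← Finset.sum_div,
    sum_fin_ite_intCast_eq f hf₀ hfk (m := (i : ℤ)) (by omega) (by omega),
    sum_fin_ite_intCast_eq f hf₀ hfk (m := (i : ℤ) - 1) (by omega) (by omega),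
    sum_fin_ite_intCast_eq f hf₀ hfk (m := (i : ℤ) + 1) (by omega) (by omega)]
  ring

theorem inv_tridiagonal_general (k : ℕ) (T : Matrix (Fin k) (Fin k) ℝ)
    (hT : ∀ i j : Fin k, T i j =
      if (i : ℕ) = j then -1
      else if (i : ℕ) + 1 = j ∨ (j : ℕ) + 1 = i then 1 / 2 else 0) :
    IsUnit T ∧
      (∀ i j : Fin k, (i : ℕ) ≤ j →
        T⁻¹ i j = 2 * ((i : ℝ) + 1) * (((j : ℝ) + 1) - k - 1) / ((k : ℝ) + 1)) ∧
      (∀ i j : Fin k, T⁻¹ i j = T⁻¹ j i) := by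
  have hTG : T * greenMatrix k = 1 := by
    ext i j
    have hj := j.isLt
    rw [Matrix.mul_apply, Matrix.one_apply]
    simp only [greenMatrix, Matrix.of_apply]
    rw [tridiagonal_sum_mul hT (greenFun k · j) (greenFun.neg_one_left (by omega))
      (greenFun.natCast_left (by omega)), greenFun.half_second_difference]
    simp [Fin.ext_iff]
  have hinv : T⁻¹ = greenMatrix k := Matrix.inv_eq_right_inv hTG
  refine ⟨IsUnit.of_mul_eq_one _ hTG, fun i j hij => ?_, fun i j => ?_⟩
  · rw [hinv, greenMatrix, Matrix.of_apply, greenFun.of_le (by exact_mod_cast hij)]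
    push_cast
    ring
  · rw [hinv, greenMatrix, Matrix.of_apply, Matrix.of_apply, greenFun.comm]

/-- The `k × k` symmetric tridiagonal matrix `T_k` with diagonal entries `-1` and
entries `1/2` on the first super- and sub-diagonals is invertible, with inverse
`(T_k⁻¹)_{i,j} = 2i(j-k-1)/(k+1)` for `1 ≤ i ≤ j ≤ k` (1-based indexing; here
`i j : Fin k` are the 0-based indices, so `i+1`, `j+1` are the 1-based ones),
and the inverse is symmetric. -/
theorem inv_tridiagonal (k : ℕ) (hk : 0 < k) (T : Matrix (Fin k) (Fin k) ℝ)
    (hT : ∀ i j : Fin k, T i j =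
      if (i : ℕ) = j then -1
      else if (i : ℕ) + 1 = j ∨ (j : ℕ) + 1 = i then 1 / 2 else 0) :
    IsUnit T ∧
      (∀ i j : Fin k, (i : ℕ) ≤ j →
        T⁻¹ i j = 2 * ((i : ℝ) + 1) * (((j : ℝ) + 1) - k - 1) / ((k : ℝ) + 1)) ∧
      (∀ i j : Fin k, T⁻¹ i j = T⁻¹ j i) :=
  inv_tridiagonal_general k T hT
end

section
/- Let m be a positive integer and let H_m be the m × m symmetric tridiagonal matrix whose diagonal entries are H_{i,i} = −1 for 1 ≤ i ≤ m − 1 and H_{m,m} = −1/2, whose entries on the first super- and sub-diagonal all equal 1/2, and whose remaining entries are 0. Then H_m is negative definite: for every nonzero vector v ∈ ℝ^m, vᵀ H_m v < 0. -/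
/-!
`H_m = -½ DᵀD`, where `D` is the backward difference matrix, `(D v)ᵢ = vᵢ - vᵢ₋₁` with
`v₋₁ = 0`. Hence `vᵀ H_m v = -½ ‖D v‖²`, which is negative for `v ≠ 0` because `D` is
unitriangular and so invertible.
-/

open Matrix

def diffMatrix (R : Type*) [Ring R] (m : ℕ) : Matrix (Fin m) (Fin m) R :=
  of fun i j => (if (i : ℕ) = j then 1 else 0) - if (i : ℕ) = j + 1 then 1 else 0

lemma transpose_diffMatrix_mul_diffMatrix_apply {R : Type*} [Ring R] {m : ℕ} (i j : Fin m) :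
    ((diffMatrix R m)ᵀ * diffMatrix R m) i j =
      if (i : ℕ) = j then (if (i : ℕ) = m - 1 then 1 else 2)
      else if (i : ℕ) + 1 = j ∨ (j : ℕ) + 1 = i then -1 else 0 := by
  have := i.isLt
  have := j.isLt
  simp only [mul_apply, transpose_apply, diffMatrix, of_apply]
  rw [Fin.sum_univ_eq_sum_range fun k =>
    ((if k = (i : ℕ) then (1 : R) else 0) - if k = (i : ℕ) + 1 then 1 else 0) *
      ((if k = (j : ℕ) then 1 else 0) - if k = (j : ℕ) + 1 then 1 else 0)]
  simp only [sub_mul, mul_sub, ite_mul, one_mul, zero_mul, Finset.sum_sub_distrib,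
    Finset.sum_ite_eq', Finset.mem_range]
  split_ifs <;> first | omega | norm_num

lemma det_diffMatrix {R : Type*} [CommRing R] (m : ℕ) : (diffMatrix R m).det = 1 := by
  rw [det_of_isLowerTriangular]
  · simp [diffMatrix]
  · intro i j hij
    have : (i : ℕ) < j := hij
    simp only [diffMatrix, of_apply]
    rw [if_neg (by omega), if_neg (by omega), sub_zero]

lemma dotProduct_transpose_mul_self_mulVec_pos {n K : Type*} [Fintype n] [DecidableEq n]
    [Field K] [LinearOrder K] [IsStrictOrderedRing K] {A : Matrix n n K} (hA : A.det ≠ 0)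
    {v : n → K} (hv : v ≠ 0) : 0 < v ⬝ᵥ ((Aᵀ * A) *ᵥ v) := by
  rw [← mulVec_mulVec, dotProduct_mulVec, vecMul_transpose]
  have hAv : A *ᵥ v ≠ 0 := fun h =>
    hv (mulVec_injective_iff_isUnit.mpr ((isUnit_iff_isUnit_det A).mpr hA.isUnit)
      (h.trans (mulVec_zero A).symm))
  exact lt_of_le_of_ne (Fintype.sum_nonneg fun i => mul_self_nonneg _)
    (Ne.symm (dotProduct_self_eq_zero.not.mpr hAv))

theorem hessian_negative_definite_general (m : ℕ) (H : Matrix (Fin m) (Fin m) ℝ)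
    (hH : ∀ i j : Fin m, H i j =
      if (i : ℕ) = j then (if (i : ℕ) = m - 1 then -(1 / 2) else -1)
      else if (i : ℕ) + 1 = j ∨ (j : ℕ) + 1 = i then 1 / 2 else 0) :
    ∀ v : Fin m → ℝ, v ≠ 0 → v ⬝ᵥ (H *ᵥ v) < 0 := by
  have hH_eq : H = -(1 / 2 : ℝ) • ((diffMatrix ℝ m)ᵀ * diffMatrix ℝ m) := by
    ext i j
    rw [hH, Matrix.smul_apply, transpose_diffMatrix_mul_diffMatrix_apply]
    split_ifs <;> norm_num
  intro v hv
  have hpos := dotProduct_transpose_mul_self_mulVec_pos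
    (A := diffMatrix ℝ m) (by rw [det_diffMatrix]; exact one_ne_zero) hv
  rw [hH_eq, smul_mulVec, dotProduct_smul, smul_eq_mul]
  linarith

/-- The `m × m` symmetric tridiagonal matrix `H_m` with diagonal entries `-1` except for
the last one which is `-1/2`, and entries `1/2` on the first super- and sub-diagonals,
is negative definite: `vᵀ H_m v < 0` for every nonzero `v ∈ ℝ^m`. -/
theorem hessian_negative_definite (m : ℕ) (hm : 0 < m) (H : Matrix (Fin m) (Fin m) ℝ)
    (hH : ∀ i j : Fin m, H i j =
      if (i : ℕ) = j then (if (i : ℕ) = m - 1 then -(1 / 2) else -1)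
      else if (i : ℕ) + 1 = j ∨ (j : ℕ) + 1 = i then 1 / 2 else 0) :
    ∀ v : Fin m → ℝ, v ≠ 0 → v ⬝ᵥ (H *ᵥ v) < 0 :=
  hessian_negative_definite_general m H hH
end

section
/- Let m be a positive integer and define Φ : (0,∞)^m → ℝ by Φ(x_1, …, x_m) = 2 log x_1 − 2 log(1 + x_1) − log x_m − 2 Σ_{l=1}^{m−1} log(1 + x_l/x_{l+1}). Then on the domain D = {x ∈ (0,∞)^m : x_m ≥ 1}, Φ attains its maximum uniquely at the point p = (1, 1, …, 1): Φ(p) = −2m log 2, and Φ(x) < −2m log 2 for every x ∈ D with x ≠ p. -/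
/-!
By AM-GM, `(1 + t)² ≥ 4t`, so `2 log (1 + a / b) ≥ 2 log 2 + log a - log b` for `a, b > 0`, with
equality iff `a = b`. Put `x₀ = 1`: then `2 log x₁ - 2 log (1 + x₁) = -2 log (1 + x₀ / x₁)`, so `Φ` is
`-log x_m` minus the sum of these expressions along the chain `x₀, x₁, …, x_m`. Summing the bounds,
the `log` terms telescope to `log x₀ - log x_m = -log x_m`, giving `Φ(x) ≤ -2m log 2`, with
equality iff all `x_l` equal `x₀ = 1`.
-/

open Real Finset

lemma Fin.sum_univ_succ_sub_castSucc {M : Type*} [AddCommGroup M] {n : ℕ} (f : Fin (n + 1) → M) :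
    ∑ i : Fin n, (f i.succ - f i.castSucc) = f (Fin.last n) - f 0 := by
  induction n with
  | zero => simp
  | succ n ih =>
    have := ih (f ∘ Fin.castSucc)
    simp only [Function.comp_apply, Fin.castSucc_zero] at this
    rw [Fin.sum_univ_castSucc, ← Fin.succ_last]
    simp only [Fin.succ_castSucc, this]
    abel

lemma Fin.eq_zero_of_castSucc_eq_succ {α : Type*} {n : ℕ} {x : Fin (n + 1) → α}
    (h : ∀ i : Fin n, x i.castSucc = x i.succ) (i : Fin (n + 1)) : x i = x 0 := by
  induction i using Fin.induction with
  | zero => rfl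
  | succ i ih => rw [← h, ih]

namespace Real

lemma two_mul_log_two_add_log_lt {t : ℝ} (ht : 0 < t) (ht1 : t ≠ 1) :
    2 * log 2 + log t < 2 * log (1 + t) := by
  have hsq : 2 ^ 2 * t < (1 + t) ^ 2 := by
    nlinarith [sq_pos_of_ne_zero (sub_ne_zero.2 ht1)]
  calc 2 * log 2 + log t = log (2 ^ 2 * t) := by
        rw [log_mul (by norm_num) ht.ne', log_pow]; push_cast; ring
    _ < log ((1 + t) ^ 2) := log_lt_log (by positivity) hsq
    _ = 2 * log (1 + t) := by rw [log_pow]; push_cast; ring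

lemma two_mul_log_two_add_log_le {t : ℝ} (ht : 0 < t) :
    2 * log 2 + log t ≤ 2 * log (1 + t) := by
  rcases eq_or_ne t 1 with rfl | ht1
  · norm_num
  · exact (two_mul_log_two_add_log_lt ht ht1).le

lemma two_mul_log_two_add_log_sub_log_le {a b : ℝ} (ha : 0 < a) (hb : 0 < b) :
    2 * log 2 + log a - log b ≤ 2 * log (1 + a / b) := by
  rw [add_sub_assoc, ← log_div ha.ne' hb.ne']
  exact two_mul_log_two_add_log_le (div_pos ha hb)

lemma two_mul_log_two_add_log_sub_log_lt {a b : ℝ} (ha : 0 < a) (hb : 0 < b) (hab : a ≠ b) :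
    2 * log 2 + log a - log b < 2 * log (1 + a / b) := by
  rw [add_sub_assoc, ← log_div ha.ne' hb.ne']
  exact two_mul_log_two_add_log_lt (div_pos ha hb) (div_ne_one_of_ne hab)

lemma two_mul_nat_mul_log_two_add_log_sub_log_lt_sum {n : ℕ} {x : Fin (n + 1) → ℝ}
    (hx : ∀ i, 0 < x i) (hne : ∃ i : Fin n, x i.castSucc ≠ x i.succ) :
    2 * n * log 2 + log (x 0) - log (x (Fin.last n)) <
      2 * ∑ i : Fin n, log (1 + x i.castSucc / x i.succ) := by
  obtain ⟨j, hj⟩ := hne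
  have htel : ∑ i : Fin n, (2 * log 2 + log (x i.castSucc) - log (x i.succ)) =
      2 * n * log 2 + log (x 0) - log (x (Fin.last n)) := by
    calc ∑ i : Fin n, (2 * log 2 + log (x i.castSucc) - log (x i.succ))
        _ = ∑ _i : Fin n, 2 * log 2 - ∑ i : Fin n, (log (x i.succ) - log (x i.castSucc)) := by
          rw [← sum_sub_distrib]; congr! 1 with i; ring
        _ = 2 * n * log 2 + log (x 0) - log (x (Fin.last n)) := by
          rw [Fin.sum_univ_succ_sub_castSucc (fun i => log (x i))]; simp; ring
  rw [← htel, mul_sum]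
  exact sum_lt_sum (fun i _ => two_mul_log_two_add_log_sub_log_le (hx _) (hx _))
    ⟨j, mem_univ _, two_mul_log_two_add_log_sub_log_lt (hx _) (hx _) hj⟩

end Real

/-- On the domain `D = {x ∈ (0,∞)^m : x_m ≥ 1}`, the function
`Φ(x) = 2 log x₁ - 2 log(1+x₁) - log x_m - 2 Σ_{l=1}^{m-1} log(1 + x_l/x_{l+1})`
attains its maximum `Φ(1,…,1) = -2m log 2` uniquely at `p = (1,…,1)`.
Coordinate `i : Fin m` of `x` plays the role of `x_{i+1}`. -/
theorem phi_unique_maximum (m : ℕ) (hm : 0 < m) (Φ : (Fin m → ℝ) → ℝ)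
    (hΦ : ∀ x : Fin m → ℝ, Φ x =
      2 * Real.log (x ⟨0, hm⟩) - 2 * Real.log (1 + x ⟨0, hm⟩) -
        Real.log (x ⟨m - 1, Nat.sub_lt hm one_pos⟩) -
        2 * ∑ l : Fin (m - 1),
          Real.log (1 + x ⟨l.1, by have := l.2; omega⟩ / x ⟨l.1 + 1, by have := l.2; omega⟩)) :
    Φ (fun _ => 1) = -(2 * m * Real.log 2) ∧
      ∀ x : Fin m → ℝ, (∀ i, 0 < x i) → 1 ≤ x ⟨m - 1, Nat.sub_lt hm one_pos⟩ →
        x ≠ (fun _ => 1) → Φ x < -(2 * m * Real.log 2) := by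
  obtain ⟨n, rfl⟩ : ∃ n, m = n + 1 := ⟨m - 1, by omega⟩
  replace hΦ : ∀ x : Fin (n + 1) → ℝ, Φ x = 2 * log (x 0) - 2 * log (1 + x 0) -
      log (x (Fin.last n)) - 2 * ∑ i : Fin n, log (1 + x i.castSucc / x i.succ) := hΦ
  refine ⟨?_, fun x hx _ hx1 => ?_⟩
  · rw [hΦ]
    norm_num
    ring
  set y : Fin (n + 2) → ℝ := Fin.cons 1 x
  have hy : ∀ i, 0 < y i := Fin.cases one_pos hx
  have hchain : ∃ i : Fin (n + 1), y i.castSucc ≠ y i.succ := by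
    by_contra! h
    exact hx1 (funext fun i => Fin.eq_zero_of_castSucc_eq_succ h i.succ)
  have hsum : ∑ i : Fin (n + 1), log (1 + y i.castSucc / y i.succ) =
      log (1 + 1 / x 0) + ∑ i : Fin n, log (1 + x i.castSucc / x i.succ) := by
    simp [Fin.sum_univ_succ, y]
  have hfirst : 2 * log (x 0) - 2 * log (1 + x 0) = -(2 * log (1 + 1 / x 0)) := by
    rw [one_add_div (hx 0).ne', log_div (by linarith [hx 0]) (hx 0).ne', add_comm (x 0) 1]
    ring
  have hbound := two_mul_nat_mul_log_two_add_log_sub_log_lt_sum hy hchain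
  rw [hsum, ← Fin.succ_last] at hbound
  simp only [y, Fin.cons_zero, Fin.cons_succ, log_one] at hbound
  rw [hΦ]
  push_cast at hbound ⊢
  linarith
end
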